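/- arXiv:2111.00557 — 3 statements merged into one kernel-verified Lean document; each statement's English description precedes it below -/
import Mathlib

section
/- Fix 0 < r < 1 and define ξ_r := ∑_{k=0}^∞ r^k/(k+2). For any real λ and any t > 0 with 2t|λ| ≤ r, one has (1 - 2tλ)^(-1/2) ≤ exp(tλ + 2t²·ξ_r·λ²). -/
noncomputable def xi (r : ℝ) : ℝ := ∑' k : ℕ, r ^ k / ((k : ℝ) + 2)

lemma summable_aux {x : ℝ} (hx : |x| < 1) :
    Summable (fun k : ℕ => x ^ k / ((k : ℝ) + 2)) := by
  refine Summable.of_abs ?_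
  refine Summable.of_nonneg_of_le (fun n => abs_nonneg _) (fun n => ?_)
    (summable_geometric_of_lt_one (abs_nonneg x) hx)
  rw [abs_div, abs_pow]
  calc |x| ^ n / |(n : ℝ) + 2| ≤ |x| ^ n / 1 := by
        apply div_le_div_of_nonneg_left (pow_nonneg (abs_nonneg x) n) one_pos
        · rw [abs_of_pos (by positivity)]; linarith [Nat.cast_nonneg (α := ℝ) n]
    _ = |x| ^ n := div_one _

theorem rpow_bound (r : ℝ) (hr : r ∈ Set.Ioo (0 : ℝ) 1) (lam t : ℝ) (ht : 0 < t)
    (htl : 2 * t * |lam| ≤ r) :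
    (1 - 2 * t * lam) ^ (-(1/2) : ℝ) ≤ Real.exp (t * lam + 2 * t ^ 2 * xi r * lam ^ 2) := by
  obtain ⟨hr0, hr1⟩ := hr
  set x := 2 * t * lam with hxdef
  have hxabs : |x| ≤ r := by
    rw [hxdef, abs_mul, abs_of_pos (by linarith : (0:ℝ) < 2 * t)]
    exact htl
  have hx1 : |x| < 1 := lt_of_le_of_lt hxabs hr1
  have hpos : 0 < 1 - x := by
    have := abs_lt.mp hx1
    linarith [this.2]
  -- series identity
  have hs := Real.hasSum_pow_div_log_of_abs_lt_one hx1
  have hsummable := hs.summable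
  set S := ∑' k : ℕ, x ^ k / ((k : ℝ) + 2) with hSdef
  have hlog : -Real.log (1 - x) = x + x ^ 2 * S := by
    rw [← hs.tsum_eq, Summable.tsum_eq_zero_add hsummable]
    simp only [pow_one, Nat.cast_zero, zero_add, div_one]
    congr 1
    have heq : (fun n : ℕ => x ^ (n + 1 + 1) / ((↑(n + 1) : ℝ) + 1)) =
        fun n : ℕ => x ^ 2 * (x ^ n / ((n : ℝ) + 2)) := by
      funext n
      push_cast
      rw [mul_div_assoc']
      ring_nf
    rw [heq, tsum_mul_left]
  have hSle : S ≤ xi r := by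
    refine Summable.tsum_le_tsum (fun n => ?_) (summable_aux hx1)
      (summable_aux (by rwa [abs_of_pos hr0]))
    have hnum : x ^ n ≤ r ^ n := calc
      x ^ n ≤ |x ^ n| := le_abs_self _
      _ = |x| ^ n := abs_pow x n
      _ ≤ r ^ n := pow_le_pow_left₀ (abs_nonneg x) hxabs n
    gcongr
  -- rewrite rpow as exp
  rw [Real.rpow_def_of_pos hpos, Real.exp_le_exp, mul_comm]
  have hx2 : x ^ 2 / 2 = 2 * t ^ 2 * lam ^ 2 := by rw [hxdef]; ring
  have : -(1/2) * Real.log (1 - x) = x / 2 + (x ^ 2 / 2) * S := by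
    have : -(1/2) * Real.log (1 - x) = (1/2) * (-Real.log (1 - x)) := by ring
    rw [this, hlog]; ring
  rw [this, hx2]
  have hxhalf : x / 2 = t * lam := by rw [hxdef]; ring
  rw [hxhalf]
  have hmul : 2 * t ^ 2 * lam ^ 2 * S ≤ 2 * t ^ 2 * xi r * lam ^ 2 := by
    have h1 : 2 * t ^ 2 * lam ^ 2 * S ≤ 2 * t ^ 2 * lam ^ 2 * xi r :=
      mul_le_mul_of_nonneg_left hSle (by positivity)
    linarith [h1, (by ring : 2 * t ^ 2 * lam ^ 2 * xi r = 2 * t ^ 2 * xi r * lam ^ 2)]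
  linarith
end

section
/- Let λ₁,…,λₙ be real numbers, not all zero, let 0 < r < 1, ξ_r := ∑_{k=0}^∞ r^k/(k+2), and let y₁,…,yₙ be i.i.d. standard Gaussians. Then for any t with 0 < t ≤ r/(2·maxᵢ|λᵢ|), E[exp(t·∑ᵢ λᵢ(yᵢ² - 1))] ≤ exp(2t²·ξ_r·∑ᵢ λᵢ²). -/
/-!
With `s = t λᵢ`, the coordinates contribute independent factors
`E[exp(s(y² - 1))] = e^{-s} (1 - 2s)^{-1/2}`, and `|2s| ≤ r < 1`. Since
`-log(1 - x) - x = x² ∑ xⁿ/(n+2)`, each factor equals `exp(2s² ∑ (2s)ⁿ/(n+2))`,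
and comparing the series termwise with `ξ_r` bounds it by `exp(2s² ξ_r)`.
-/

open MeasureTheory ProbabilityTheory

open Real

lemma integral_exp_mul_sq_gaussianReal {s : ℝ} (hs : s < 1 / 2) :
    ∫ x, exp (s * x ^ 2) ∂(gaussianReal 0 1) = (√(1 - 2 * s))⁻¹ := by
  have hpdf (x : ℝ) : gaussianPDFReal 0 1 x • exp (s * x ^ 2)
      = (√(2 * π))⁻¹ * exp (-(1 / 2 - s) * x ^ 2) := by
    simp only [gaussianPDFReal, NNReal.coe_one, mul_one, sub_zero, smul_eq_mul]
    rw [mul_assoc, ← exp_add]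
    ring_nf
  have hs' : 0 < 1 - 2 * s := by linarith
  simp_rw [integral_gaussianReal_eq_integral_smul one_ne_zero, hpdf, integral_const_mul,
    integral_gaussian]
  rw [← sqrt_inv, ← sqrt_inv, ← sqrt_mul (by positivity)]
  congr 1
  field_simp

lemma summable_pow_div_add_two {x : ℝ} (hx : |x| < 1) :
    Summable fun n : ℕ => x ^ n / ((n : ℝ) + 2) := by
  refine Summable.of_norm_bounded (summable_geometric_of_lt_one (abs_nonneg x) hx) fun n => ?_
  rw [norm_div, norm_pow, Real.norm_eq_abs, Real.norm_of_nonneg (by positivity)]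
  exact div_le_self (by positivity) (by linarith [n.cast_nonneg (α := ℝ)])

lemma neg_log_one_sub_sub_self {x : ℝ} (hx : |x| < 1) :
    -log (1 - x) - x = x ^ 2 * ∑' n : ℕ, x ^ n / ((n : ℝ) + 2) := by
  have h := (hasSum_nat_add_iff' 1).mpr (hasSum_pow_div_log_of_abs_lt_one hx)
  norm_num at h
  rw [← tsum_mul_left, ← h.tsum_eq]
  exact tsum_congr fun n => by ring

lemma tsum_pow_div_add_two_le_xi {x r : ℝ} (hxr : |x| ≤ r) (hr : r < 1) :
    ∑' n : ℕ, x ^ n / ((n : ℝ) + 2) ≤ xi r := by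
  have hr' : |r| < 1 := by rwa [abs_of_nonneg ((abs_nonneg x).trans hxr)]
  refine (summable_pow_div_add_two (hxr.trans_lt hr)).tsum_le_tsum (fun n => ?_)
    (summable_pow_div_add_two hr')
  refine div_le_div_of_nonneg_right ?_ (by positivity)
  calc x ^ n ≤ |x| ^ n := by rw [← abs_pow]; exact le_abs_self _
    _ ≤ r ^ n := pow_le_pow_left₀ (abs_nonneg x) hxr n

lemma exp_neg_mul_inv_sqrt_le {s r : ℝ} (hs : |2 * s| ≤ r) (hr : r < 1) :
    exp (-s) * (√(1 - 2 * s))⁻¹ ≤ exp (2 * s ^ 2 * xi r) := by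
  have hs' : |2 * s| < 1 := hs.trans_lt hr
  have hpos : 0 < 1 - 2 * s := by linarith [le_abs_self (2 * s)]
  calc exp (-s) * (√(1 - 2 * s))⁻¹ = exp ((-log (1 - 2 * s) - 2 * s) / 2) := by
        rw [← exp_log (sqrt_pos.2 hpos), log_sqrt hpos.le, ← exp_neg, ← exp_add]
        ring_nf
    _ = exp (2 * s ^ 2 * ∑' n : ℕ, (2 * s) ^ n / ((n : ℝ) + 2)) := by
        rw [neg_log_one_sub_sub_self hs']
        ring_nf
    _ ≤ exp (2 * s ^ 2 * xi r) := by
        gcongr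
        exact tsum_pow_div_add_two_le_xi hs hr

lemma integral_exp_mul_sq_sub_one_gaussianReal_le {s r : ℝ} (hs : |2 * s| ≤ r) (hr : r < 1) :
    ∫ x, exp (s * (x ^ 2 - 1)) ∂(gaussianReal 0 1) ≤ exp (2 * s ^ 2 * xi r) := by
  have hs' : s < 1 / 2 := by linarith [le_abs_self (2 * s), hs.trans_lt hr]
  calc ∫ x, exp (s * (x ^ 2 - 1)) ∂(gaussianReal 0 1)
      = exp (-s) * ∫ x, exp (s * x ^ 2) ∂(gaussianReal 0 1) := by
        rw [← integral_const_mul]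
        simp_rw [← exp_add]
        ring_nf
    _ = exp (-s) * (√(1 - 2 * s))⁻¹ := by rw [integral_exp_mul_sq_gaussianReal hs']
    _ ≤ exp (2 * s ^ 2 * xi r) := exp_neg_mul_inv_sqrt_le hs hr

lemma abs_two_mul_mul_le_of_le_div_iSup {ι : Type*} [Finite ι] {a : ι → ℝ} {t r : ℝ}
    (ht : 0 < t) (htr : t ≤ r / (2 * ⨆ i, |a i|)) (i : ι) : |2 * (t * a i)| ≤ r := by
  -- if `a = 0`, then `r / 0 = 0` turns `htr` into `t ≤ 0`
  have hM : 0 < ⨆ i, |a i| := by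
    refine (Real.iSup_nonneg fun i => abs_nonneg (a i)).lt_of_ne fun hM => ?_
    rw [← hM, mul_zero, div_zero] at htr
    linarith
  have hai : |a i| ≤ ⨆ i, |a i| :=
    le_ciSup (f := fun i => |a i|) (Set.finite_range _).bddAbove i
  rw [le_div_iff₀ (by positivity)] at htr
  rw [abs_mul, abs_mul, abs_two, abs_of_pos ht]
  nlinarith

theorem mgf_sum_bound_general (n : ℕ) (lam : Fin n → ℝ)
    (r : ℝ) (hr : r ∈ Set.Ioo (0 : ℝ) 1) (t : ℝ) (ht : 0 < t)
    (ht2 : t ≤ r / (2 * ⨆ i, |lam i|)) :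
    ∫ y, Real.exp (t * ∑ i, lam i * ((y i) ^ 2 - 1))
        ∂(Measure.pi fun _ : Fin n => gaussianReal 0 1)
      ≤ Real.exp (2 * t ^ 2 * xi r * ∑ i, lam i ^ 2) := by
  calc ∫ y, exp (t * ∑ i, lam i * ((y i) ^ 2 - 1))
        ∂(Measure.pi fun _ : Fin n => gaussianReal 0 1)
      = ∏ i, ∫ x, exp (t * lam i * (x ^ 2 - 1)) ∂(gaussianReal 0 1) := by
        simp_rw [Finset.mul_sum, exp_sum, ← mul_assoc]
        exact integral_fintype_prod_eq_prod (fun i x => exp (t * lam i * (x ^ 2 - 1)))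
    _ ≤ ∏ i, exp (2 * (t * lam i) ^ 2 * xi r) :=
        Finset.prod_le_prod (fun i _ => integral_nonneg fun _ => (exp_pos _).le) fun i _ =>
          integral_exp_mul_sq_sub_one_gaussianReal_le
            (abs_two_mul_mul_le_of_le_div_iSup ht ht2 i) hr.2
    _ = exp (2 * t ^ 2 * xi r * ∑ i, lam i ^ 2) := by
        rw [← exp_sum, Finset.mul_sum]
        exact congrArg exp (Finset.sum_congr rfl fun i _ => by ring)

theorem mgf_sum_bound (n : ℕ) (lam : Fin n → ℝ) (hlam : lam ≠ 0)
    (r : ℝ) (hr : r ∈ Set.Ioo (0 : ℝ) 1) (t : ℝ) (ht : 0 < t)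
    (ht2 : t ≤ r / (2 * ⨆ i, |lam i|)) :
    ∫ y, Real.exp (t * ∑ i, lam i * ((y i) ^ 2 - 1))
        ∂(Measure.pi fun _ : Fin n => gaussianReal 0 1)
      ≤ Real.exp (2 * t ^ 2 * xi r * ∑ i, lam i ^ 2) :=
  mgf_sum_bound_general n lam r hr t ht ht2
end

section
/- Let y₁,…,yₙ be i.i.d. standard Gaussian random variables, λ₁,…,λₙ real numbers not all zero, and a > 0. Then P(|∑ᵢ λᵢ(yᵢ² - 1)| > a) ≤ 2·exp(-κ·min{a²/∑ᵢλᵢ², a/maxᵢ|λᵢ|}) with κ = 1/8. -/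
/-!
Bernstein's argument for a sub-exponential variable. Under the standard Gaussian,
`E exp (s (y² - 1)) = e^{-s} / √(1 - 2s) ≤ e^{2s²}` for `s ≤ 1/4`, so by independence
`X = ∑ λᵢ (yᵢ² - 1)` has `E exp (t X) ≤ exp (2 t² ∑ λᵢ²)` whenever `|t| ≤ 1 / (4 max |λᵢ|)`.
The Chernoff bound at `t = min (a / (4 ∑ λᵢ²)) (1 / (4 max |λᵢ|))` controls each tail by
`exp (-(1/8) min (a² / ∑ λᵢ², a / max |λᵢ|))`.
-/

open MeasureTheory ProbabilityTheory Real

lemma one_le_exp_add_sq_mul_one_sub {u : ℝ} (hu : u ≤ 1 / 2) :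
    1 ≤ exp (u + u ^ 2) * (1 - u) := by
  have h1u : 0 ≤ 1 - u := by linarith
  rcases le_total u 0 with hneg | hpos
  · -- `(1 + u + u²)(1 - u) = 1 - u³ ≥ 1`
    nlinarith [mul_le_mul_of_nonneg_right (add_one_le_exp (u + u ^ 2)) h1u, pow_two_nonneg u]
  · -- the quadratic Taylor bound leaves `u²(1 + u)²(1 - u)/2 - u³ = u²(1 - u - u² - u³)/2`
    have hq := mul_le_mul_of_nonneg_right
      (quadratic_le_exp_of_nonneg (by positivity : 0 ≤ u + u ^ 2)) h1u
    nlinarith [hq, mul_nonneg (mul_nonneg hpos hpos) (by nlinarith : 0 ≤ 1 - u - u ^ 2 - u ^ 3)]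

lemma exp_neg_div_sqrt_one_sub_two_mul_le {s : ℝ} (hs : s ≤ 1 / 4) :
    exp (-s) / √(1 - 2 * s) ≤ exp (2 * s ^ 2) := by
  have h12 : 0 < 1 - 2 * s := by linarith
  have key : exp (-(2 * s)) ≤ exp (4 * s ^ 2) * (1 - 2 * s) := by
    have := mul_le_mul_of_nonneg_left (one_le_exp_add_sq_mul_one_sub (u := 2 * s) (by linarith))
      (exp_pos (-(2 * s))).le
    rwa [mul_one, ← mul_assoc, ← exp_add, show -(2 * s) + (2 * s + (2 * s) ^ 2) = 4 * s ^ 2 by ring]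
      at this
  rw [div_le_iff₀ (sqrt_pos.mpr h12)]
  calc exp (-s) = √(exp (-(2 * s))) := by
        rw [← sqrt_sq (exp_pos _).le, ← exp_nat_mul]; congr 2; ring
    _ ≤ √(exp (4 * s ^ 2) * (1 - 2 * s)) := sqrt_le_sqrt key
    _ = exp (2 * s ^ 2) * √(1 - 2 * s) := by
        rw [sqrt_mul (exp_pos _).le, ← sqrt_sq (exp_pos (2 * s ^ 2)).le, ← exp_nat_mul]
        congr 3; ring

lemma neg_mul_add_mul_sq_min_le {K c : ℝ} (a : ℝ) (hK : 0 < K) (hc : 0 ≤ c) :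
    -(min (a / (2 * K)) c * a) + K * min (a / (2 * K)) c ^ 2
      ≤ -min (a ^ 2 / (4 * K)) (a * c / 2) := by
  rcases le_total (a / (2 * K)) c with h | h
  · rw [min_eq_left h]
    have : -(a / (2 * K) * a) + K * (a / (2 * K)) ^ 2 = -(a ^ 2 / (4 * K)) := by
      field_simp; ring
    linarith [min_le_left (a ^ 2 / (4 * K)) (a * c / 2)]
  · rw [min_eq_right h]
    have hKc : K * c ≤ a / 2 := by rw [le_div_iff₀ (by positivity)] at h; linarith
    nlinarith [min_le_right (a ^ 2 / (4 * K)) (a * c / 2), mul_le_mul_of_nonneg_left hKc hc]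

section Bernstein

variable {Ω : Type*} {m : MeasurableSpace Ω} {μ : Measure Ω} [IsFiniteMeasure μ] {X : Ω → ℝ}
  {K c a : ℝ}

lemma measureReal_ge_le_exp_neg_min_of_mgf_le (hK : 0 < K) (hc : 0 ≤ c) (ha : 0 ≤ a)
    (h_int : ∀ t, 0 ≤ t → t ≤ c → Integrable (fun ω ↦ exp (t * X ω)) μ)
    (h_mgf : ∀ t, 0 ≤ t → t ≤ c → mgf X μ t ≤ exp (K * t ^ 2)) :
    μ.real {ω | a ≤ X ω} ≤ exp (-min (a ^ 2 / (4 * K)) (a * c / 2)) := by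
  set t := min (a / (2 * K)) c
  have ht0 : 0 ≤ t := le_min (by positivity) hc
  have htc : t ≤ c := min_le_right _ _
  calc μ.real {ω | a ≤ X ω} ≤ exp (-t * a) * mgf X μ t :=
        measure_ge_le_exp_mul_mgf a ht0 (h_int t ht0 htc)
    _ ≤ exp (-t * a) * exp (K * t ^ 2) := by gcongr; exact h_mgf t ht0 htc
    _ = exp (-(t * a) + K * t ^ 2) := by rw [← exp_add, neg_mul]
    _ ≤ exp (-min (a ^ 2 / (4 * K)) (a * c / 2)) :=
        exp_le_exp.mpr (neg_mul_add_mul_sq_min_le a hK hc)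

lemma measure_abs_ge_le_ofReal_two_mul_exp_neg_min_of_mgf_le (hK : 0 < K) (hc : 0 ≤ c)
    (ha : 0 ≤ a) (h_int : ∀ t, |t| ≤ c → Integrable (fun ω ↦ exp (t * X ω)) μ)
    (h_mgf : ∀ t, |t| ≤ c → mgf X μ t ≤ exp (K * t ^ 2)) :
    μ {ω | a ≤ |X ω|} ≤ ENNReal.ofReal (2 * exp (-min (a ^ 2 / (4 * K)) (a * c / 2))) := by
  have h_abs : ∀ t, 0 ≤ t → t ≤ c → |t| ≤ c ∧ |-t| ≤ c := fun t ht htc ↦ by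
    rw [abs_neg, abs_of_nonneg ht]; exact ⟨htc, htc⟩
  have h_upper := measureReal_ge_le_exp_neg_min_of_mgf_le hK hc ha
    (fun t ht htc ↦ h_int t (h_abs t ht htc).1) (fun t ht htc ↦ h_mgf t (h_abs t ht htc).1)
  have h_lower := measureReal_ge_le_exp_neg_min_of_mgf_le (X := -X) hK hc ha
    (fun t ht htc ↦ by simpa [neg_mul_comm] using h_int (-t) (h_abs t ht htc).2)
    (fun t ht htc ↦ by simpa [mgf_neg] using h_mgf (-t) (h_abs t ht htc).2)
  have h_union : {ω | a ≤ |X ω|} = {ω | a ≤ X ω} ∪ {ω | a ≤ (-X) ω} := by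
    ext ω; simp [le_abs]
  rw [← ofReal_measureReal, h_union]
  exact ENNReal.ofReal_le_ofReal ((measureReal_union_le _ _).trans (by linarith))

end Bernstein

lemma gaussianPDFReal_zero_one_mul_exp_mul_sq_sub_one (s x : ℝ) :
    gaussianPDFReal 0 1 x * exp (s * (x ^ 2 - 1))
      = (√(2 * π))⁻¹ * exp (-s) * exp (-(1 / 2 - s) * x ^ 2) := by
  simp only [gaussianPDFReal, NNReal.coe_one, mul_one, sub_zero]
  rw [mul_assoc, mul_assoc, ← exp_add, ← exp_add]
  congr 2
  ring

lemma integrable_exp_mul_sq_sub_one_gaussianReal {s : ℝ} (hs : s < 1 / 2) :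
    Integrable (fun x ↦ exp (s * (x ^ 2 - 1))) (gaussianReal 0 1) := by
  rw [gaussianReal_of_var_ne_zero _ one_ne_zero,
    integrable_withDensity_iff_integrable_smul' (measurable_gaussianPDF 0 1)
      (ae_of_all _ fun _ ↦ gaussianPDF_lt_top)]
  simp_rw [toReal_gaussianPDF, smul_eq_mul, gaussianPDFReal_zero_one_mul_exp_mul_sq_sub_one]
  exact (integrable_exp_neg_mul_sq (by linarith)).const_mul _

/-- For `s ≥ 1 / 2` both sides are junk `0`. -/
lemma mgf_sq_sub_one_gaussianReal (s : ℝ) :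
    mgf (fun x ↦ x ^ 2 - 1) (gaussianReal 0 1) s = exp (-s) / √(1 - 2 * s) := by
  rw [mgf, integral_gaussianReal_eq_integral_smul one_ne_zero]
  simp_rw [smul_eq_mul, gaussianPDFReal_zero_one_mul_exp_mul_sq_sub_one]
  rw [integral_const_mul, integral_gaussian, mul_comm _ (exp _), mul_assoc, div_eq_mul_inv (exp _)]
  congr 1
  rw [← sqrt_inv, ← sqrt_mul (by positivity), ← sqrt_inv]
  congr 1
  field_simp

section WeightedChiSquare

variable {ι : Type*} [Fintype ι] (lam : ι → ℝ) {t : ℝ}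

lemma exp_mul_sum_mul (f : ι → ℝ) (t : ℝ) :
    exp (t * ∑ i, lam i * f i) = ∏ i, exp (t * lam i * f i) := by
  simp_rw [Finset.mul_sum, exp_sum, mul_assoc]

lemma integrable_exp_mul_sum_mul_sq_sub_one_pi (ht : ∀ i, t * lam i < 1 / 2) :
    Integrable (fun y ↦ exp (t * ∑ i, lam i * (y i ^ 2 - 1)))
      (Measure.pi fun _ : ι ↦ gaussianReal 0 1) := by
  simp_rw [exp_mul_sum_mul]
  exact Integrable.fintype_prod fun i ↦ integrable_exp_mul_sq_sub_one_gaussianReal (ht i)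

lemma mgf_sum_mul_sq_sub_one_pi (t : ℝ) :
    mgf (fun y ↦ ∑ i, lam i * (y i ^ 2 - 1)) (Measure.pi fun _ : ι ↦ gaussianReal 0 1) t
      = ∏ i, exp (-(t * lam i)) / √(1 - 2 * (t * lam i)) := by
  rw [mgf]
  simp_rw [exp_mul_sum_mul]
  exact (integral_fintype_prod_eq_prod fun i x ↦ exp (t * lam i * (x ^ 2 - 1))).trans
    (Finset.prod_congr rfl fun i _ ↦ mgf_sq_sub_one_gaussianReal (t * lam i))

lemma mgf_sum_mul_sq_sub_one_pi_le (ht : ∀ i, t * lam i ≤ 1 / 4) :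
    mgf (fun y ↦ ∑ i, lam i * (y i ^ 2 - 1)) (Measure.pi fun _ : ι ↦ gaussianReal 0 1) t
      ≤ exp (2 * (∑ i, lam i ^ 2) * t ^ 2) := by
  rw [mgf_sum_mul_sq_sub_one_pi]
  calc ∏ i, exp (-(t * lam i)) / √(1 - 2 * (t * lam i))
      ≤ ∏ i, exp (2 * (t * lam i) ^ 2) :=
        Finset.prod_le_prod (fun i _ ↦ by positivity)
          fun i _ ↦ exp_neg_div_sqrt_one_sub_two_mul_le (ht i)
    _ = exp (2 * (∑ i, lam i ^ 2) * t ^ 2) := by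
        rw [← exp_sum, Finset.mul_sum, Finset.sum_mul]
        congr 1
        exact Finset.sum_congr rfl fun i _ ↦ by ring

end WeightedChiSquare

theorem hanson_wright_diagonal_eighth (n : ℕ) (lam : Fin n → ℝ) (hlam : lam ≠ 0)
    (a : ℝ) (ha : 0 < a) :
    (Measure.pi fun _ : Fin n => gaussianReal 0 1)
        {y | a < |∑ i, lam i * ((y i) ^ 2 - 1)|}
      ≤ ENNReal.ofReal (2 * Real.exp
          (-(1/8) * min (a ^ 2 / ∑ i, lam i ^ 2) (a / ⨆ i, |lam i|))) := by
  set S := ∑ i, lam i ^ 2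
  set M := ⨆ i, |lam i|
  obtain ⟨i₀, hi₀⟩ := Function.ne_iff.mp hlam
  have hM_le : ∀ i, |lam i| ≤ M := le_ciSup (Set.finite_range _).bddAbove
  have hM : 0 < M := (abs_pos.mpr hi₀).trans_le (hM_le i₀)
  have hS : 0 < S := (pow_pos (abs_pos.mpr hi₀) 2).trans_le <| by
    rw [sq_abs]; exact Finset.single_le_sum (fun i _ ↦ sq_nonneg (lam i)) (Finset.mem_univ i₀)
  have h_small : ∀ t, |t| ≤ 1 / (4 * M) → ∀ i, t * lam i ≤ 1 / 4 := fun t ht i ↦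
    calc t * lam i ≤ |t| * |lam i| := by rw [← abs_mul]; exact le_abs_self _
      _ ≤ 1 / (4 * M) * M := by gcongr; exact hM_le i
      _ = 1 / 4 := by field_simp
  have h_tail := measure_abs_ge_le_ofReal_two_mul_exp_neg_min_of_mgf_le (K := 2 * S)
    (c := 1 / (4 * M)) (by positivity) (by positivity) ha.le
    (fun t ht ↦ integrable_exp_mul_sum_mul_sq_sub_one_pi lam fun i ↦
      (h_small t ht i).trans_lt (by norm_num))
    (fun t ht ↦ mgf_sum_mul_sq_sub_one_pi_le lam (h_small t ht))
  have h_exponent : min (a ^ 2 / (4 * (2 * S))) (a * (1 / (4 * M)) / 2)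
      = 1 / 8 * min (a ^ 2 / S) (a / M) := by
    rw [mul_min_of_nonneg _ _ (by norm_num)]
    congr 1 <;> field_simp <;> ring
  calc _ ≤ _ := measure_mono fun y (hy : a < _) ↦ hy.le
    _ ≤ _ := h_tail
    _ = _ := by rw [h_exponent, neg_mul]
end
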